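/- Under the No-Boundary overlay construction, for any s ∈ G_i and t ∈ G_j with i ≠ j where neither s nor t is a boundary vertex, the global shortest distance satisfies d_G(s,t) = min over b_p ∈ B_i, b_q ∈ B_j of [ d_{G_i}(s, b_p) + d_{G̃}(b_p, b_q) + d_{G_j}(b_q, t) ]. -/

import Mathlib

open scoped ENNReal Classical

namespace PSP

/-- A weighted undirected graph: symmetric adjacency and a weight function
with values in `ℝ≥0∞` (so weights are non-negative). -/
structure WGraph (V : Type*) where
  Adj : V → V → Prop
  symm : ∀ {u v}, Adj u v → Adj v u
  w : V → V → ℝ≥0∞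

variable {V : Type*} {ι : Type*}

/-- Sum of `f` over consecutive pairs of a list. -/
noncomputable def pairSum (f : V → V → ℝ≥0∞) : List V → ℝ≥0∞
  | a :: b :: rest => f a b + pairSum f (b :: rest)
  | _ => 0

/-- Weighted length of a walk (given as a list of vertices). -/
noncomputable def wlen (G : WGraph V) (l : List V) : ℝ≥0∞ := pairSum G.w l

/-- `l` is a walk in `G` from `s` to `t`: consecutive vertices are adjacent,
the first vertex is `s` and the last is `t`. -/
def IsWalk (G : WGraph V) (s t : V) (l : List V) : Prop :=
  l.Chain' G.Adj ∧ l.head? = some s ∧ l.getLast? = some t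

/-- Shortest-path distance in `G` (`⊤` if no walk exists). -/
noncomputable def dist (G : WGraph V) (s t : V) : ℝ≥0∞ :=
  sInf {x | ∃ l, IsWalk G s t l ∧ wlen G l = x}

/-- Induced subgraph on a vertex set `S`. -/
def induce (G : WGraph V) (S : Set V) : WGraph V where
  Adj u v := G.Adj u v ∧ u ∈ S ∧ v ∈ S
  symm h := ⟨G.symm h.1, h.2.2, h.2.1⟩
  w := G.w

/-- A partition of the vertex set is given by a function `P : V → ι`
assigning each vertex its partition index. The set of all boundary
vertices: vertices having a neighbor in another partition. -/
def bdry (G : WGraph V) (P : V → ι) : Set V :=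
  {v | ∃ u, G.Adj v u ∧ P u ≠ P v}

/-- Boundary vertices of partition `i`. -/
def bdryIn (G : WGraph V) (P : V → ι) (i : ι) : Set V :=
  {v | P v = i ∧ ∃ u, G.Adj v u ∧ P u ≠ i}

/-- The induced subgraph `G_i` of partition `i`. -/
def partGraph (G : WGraph V) (P : V → ι) (i : ι) : WGraph V :=
  induce G {x | P x = i}

/-- The No-Boundary overlay graph `G̃`: vertices are boundary vertices; for each
partition, each boundary pair gets an edge of weight equal to the *local*
partition distance; inter-partition edges of `G` keep their original weight. -/
noncomputable def overlay (G : WGraph V) (P : V → ι) : WGraph V where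
  Adj u v := (P u = P v ∧ u ∈ bdry G P ∧ v ∈ bdry G P) ∨ (P u ≠ P v ∧ G.Adj u v)
  symm := by
    rintro u v (⟨h1, h2, h3⟩ | ⟨h1, h2⟩)
    · exact Or.inl ⟨h1.symm, h3, h2⟩
    · exact Or.inr ⟨fun h => h1 h.symm, G.symm h2⟩
  w u v := if P u = P v then dist (partGraph G P (P u)) u v else G.w u v

/-- A half-connected boundary vertex: has a non-boundary neighbor in its own partition. -/
def halfC (G : WGraph V) (P : V → ι) (b : V) : Prop :=
  b ∈ bdry G P ∧ ∃ u, G.Adj b u ∧ P u = P b ∧ u ∉ bdry G P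

/-- A full-connected boundary vertex: all in-partition neighbors are boundary vertices. -/
def fullC (G : WGraph V) (P : V → ι) (b : V) : Prop :=
  b ∈ bdry G P ∧ ∀ u, G.Adj b u → P u = P b → u ∈ bdry G P

/-- The pruned overlay graph `G̃'`, with inserted boundary-pair weights `ω`:
edges among half-connected boundary pairs of the same partition (weight `ω`),
all inter-partition edges, and the original in-partition adjacent edges of
full-connected boundary vertices. -/
noncomputable def pruned (G : WGraph V) (P : V → ι) (ω : V → V → ℝ≥0∞) : WGraph V where
  Adj u v :=
    (P u = P v ∧ halfC G P u ∧ halfC G P v) ∨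
    (P u ≠ P v ∧ G.Adj u v) ∨
    (P u = P v ∧ G.Adj u v ∧ u ∈ bdry G P ∧ v ∈ bdry G P ∧ (fullC G P u ∨ fullC G P v))
  symm := by
    rintro u v (⟨h1, h2, h3⟩ | ⟨h1, h2⟩ | ⟨h1, h2, h3, h4, h5⟩)
    · exact Or.inl ⟨h1.symm, h3, h2⟩
    · exact Or.inr (Or.inl ⟨fun h => h1 h.symm, G.symm h2⟩)
    · exact Or.inr (Or.inr ⟨h1.symm, G.symm h2, h4, h3, h5.symm⟩)
  w u v := if P u = P v ∧ halfC G P u ∧ halfC G P v then ω u v else G.w u v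

/-- The augmented partition graph `G'_i`: the induced subgraph `G_i` plus, for each
boundary pair `b₁ b₂ ∈ B_i`, an inserted edge of weight `ω b₁ b₂` (taking the
minimum with an already-existing edge weight). -/
noncomputable def augment (G : WGraph V) (P : V → ι) (i : ι) (ω : V → V → ℝ≥0∞) : WGraph V where
  Adj u v := (G.Adj u v ∧ P u = i ∧ P v = i) ∨ (u ∈ bdryIn G P i ∧ v ∈ bdryIn G P i)
  symm := by
    rintro u v (⟨h1, h2, h3⟩ | ⟨h1, h2⟩)
    · exact Or.inl ⟨G.symm h1, h3, h2⟩
    · exact Or.inr ⟨h2, h1⟩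
  w u v :=
    if u ∈ bdryIn G P i ∧ v ∈ bdryIn G P i then
      (if G.Adj u v ∧ P u = i ∧ P v = i then min (ω u v) (G.w u v) else ω u v)
    else G.w u v

/-- Graph obtained from `G` by adding, for every pair `u v ∈ S`, a shortcut edge
of weight `dist G u v` (taking the minimum with an already-existing edge weight). -/
noncomputable def shortcut (G : WGraph V) (S : Set V) : WGraph V where
  Adj u v := G.Adj u v ∨ (u ∈ S ∧ v ∈ S)
  symm := by
    rintro u v (h | ⟨h1, h2⟩)
    · exact Or.inl (G.symm h)
    · exact Or.inr ⟨h2, h1⟩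
  w u v :=
    if u ∈ S ∧ v ∈ S then
      (if G.Adj u v then min (dist G u v) (G.w u v) else dist G u v)
    else G.w u v

/-- Vertex-splitting construction: each cut vertex `x ∈ X` keeps its neighbors in
group `N x 0`; for `1 ≤ i ≤ l x` a duplicate `(x, i)` is created, connected to the
vertices of `N x i` with the original weights and to `x` by a zero-weight edge. -/
noncomputable def split (G : WGraph V) (X : Set V) (N : V → ℕ → Set V) (l : V → ℕ) :
    WGraph (V ⊕ V × ℕ) where
  Adj a b := match a, b with
    | .inl u, .inl v => G.Adj u v ∧ (u ∈ X → v ∈ N u 0) ∧ (v ∈ X → u ∈ N v 0)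
    | .inl v, .inr (x, i) => x ∈ X ∧ 1 ≤ i ∧ i ≤ l x ∧ ((G.Adj x v ∧ v ∈ N x i) ∨ v = x)
    | .inr (x, i), .inl v => x ∈ X ∧ 1 ≤ i ∧ i ≤ l x ∧ ((G.Adj x v ∧ v ∈ N x i) ∨ v = x)
    | .inr _, .inr _ => False
  symm := by
    rintro (u | ⟨x, i⟩) (v | ⟨y, j⟩) h
    · exact ⟨G.symm h.1, h.2.2, h.2.1⟩
    · exact h
    · exact h
    · exact h.elim
  w a b := match a, b with
    | .inl u, .inl v => G.w u v
    | .inl v, .inr (x, _) => if v = x then 0 else G.w x v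
    | .inr (x, _), .inl v => if v = x then 0 else G.w x v
    | .inr _, .inr _ => 0

/-! A shortest `s`–`t` walk leaves partition `i` for the first time at some `b_p ∈ B_i`, so its
prefix is a walk in `G_i`, and enters partition `j` for the last time at some `b_q ∈ B_j`, so its
suffix is a walk in `G_j`; the middle part is bounded below by `d_G(b_p, b_q) = d_{G̃}(b_p, b_q)`.
Conversely every such concatenation is a walk in `G`. -/

lemma isWalk_iff {G : WGraph V} {s t : V} {l : List V} :
    IsWalk G s t l ↔ l.IsChain G.Adj ∧ l.head? = some s ∧ l.getLast? = some t := Iff.rfl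

lemma isWalk_nil_iff {G : WGraph V} {s t : V} : IsWalk G s t [] ↔ False := by
  simp [isWalk_iff]

lemma isWalk_singleton_iff {G : WGraph V} {s t a : V} : IsWalk G s t [a] ↔ s = a ∧ t = a := by
  simp [isWalk_iff, eq_comm]

lemma isWalk_cons_cons_iff {G : WGraph V} {s t a b : V} {l : List V} :
    IsWalk G s t (a :: b :: l) ↔ s = a ∧ G.Adj a b ∧ IsWalk G b t (b :: l) := by
  simp only [isWalk_iff, List.isChain_cons_cons, List.head?_cons, Option.some.injEq,
    List.getLast?_cons_cons, true_and, eq_comm]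
  tauto

lemma IsWalk.cons {G : WGraph V} {s b t : V} {l : List V} (hsb : G.Adj s b)
    (h : IsWalk G b t (b :: l)) : IsWalk G s t (s :: b :: l) :=
  isWalk_cons_cons_iff.2 ⟨rfl, hsb, h⟩

lemma wlen_cons_cons (G : WGraph V) (a b : V) (l : List V) :
    wlen G (a :: b :: l) = G.w a b + wlen G (b :: l) := rfl

@[elab_as_elim]
theorem IsWalk.induction {G : WGraph V} {t : V}
    {motive : (s : V) → (l : List V) → IsWalk G s t l → Prop}
    (singleton : motive t [t] (isWalk_singleton_iff.2 ⟨rfl, rfl⟩))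
    (cons : ∀ s b l (hsb : G.Adj s b) (h : IsWalk G b t (b :: l)), motive b (b :: l) h →
      motive s (s :: b :: l) (h.cons hsb))
    {s : V} {l : List V} (h : IsWalk G s t l) : motive s l h := by
  induction l generalizing s with
  | nil => exact (isWalk_nil_iff.1 h).elim
  | cons a l ih =>
    cases l with
    | nil =>
      obtain ⟨rfl, rfl⟩ := isWalk_singleton_iff.1 h
      exact singleton
    | cons b l =>
      obtain ⟨rfl, hsb, h⟩ := isWalk_cons_cons_iff.1 h
      exact cons s b l hsb h (ih h)

lemma IsWalk.append {G : WGraph V} {s m t : V} {l₁ l₂ : List V}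
    (h₁ : IsWalk G s m l₁) (h₂ : IsWalk G m t l₂) :
    IsWalk G s t (l₁ ++ l₂.tail) ∧ wlen G (l₁ ++ l₂.tail) = wlen G l₁ + wlen G l₂ := by
  induction h₁ using IsWalk.induction with
  | singleton =>
    cases l₂ with
    | nil => exact (isWalk_nil_iff.1 h₂).elim
    | cons a l =>
      obtain rfl : a = m := by simpa using h₂.2.1
      simpa [wlen, pairSum] using h₂
  | cons s b l hsb _ ih =>
    refine ⟨ih.1.cons hsb, ?_⟩
    simp only [List.cons_append, wlen_cons_cons] at ih ⊢
    rw [ih.2, add_assoc]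

lemma dist_le_wlen {G : WGraph V} {s t : V} {l : List V} (h : IsWalk G s t l) :
    dist G s t ≤ wlen G l :=
  sInf_le ⟨l, h, rfl⟩

lemma le_dist_of_forall_isWalk {G : WGraph V} {s t : V} {x : ℝ≥0∞}
    (h : ∀ l, IsWalk G s t l → x ≤ wlen G l) : x ≤ dist G s t :=
  le_sInf fun _ ⟨l, hl, hx⟩ => hx ▸ h l hl

lemma dist_self (G : WGraph V) (s : V) : dist G s s = 0 :=
  nonpos_iff_eq_zero.1 (dist_le_wlen (isWalk_singleton_iff.2 ⟨rfl, rfl⟩))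

lemma dist_le_of_adj {G : WGraph V} {u v : V} (h : G.Adj u v) : dist G u v ≤ G.w u v := by
  simpa [wlen, pairSum] using dist_le_wlen ((isWalk_singleton_iff.2 ⟨rfl, rfl⟩).cons h)

lemma dist_triangle (G : WGraph V) (s m t : V) : dist G s t ≤ dist G s m + dist G m t := by
  rw [dist.eq_1 G s m, dist.eq_1 G m t, sInf_eq_iInf, sInf_eq_iInf]
  refine ENNReal.le_iInf₂_add_iInf₂ ?_
  rintro _ ⟨l₁, h₁, rfl⟩ _ ⟨l₂, h₂, rfl⟩
  obtain ⟨h, hlen⟩ := h₁.append h₂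
  exact hlen ▸ dist_le_wlen h

lemma dist_le_add_of_adj {G : WGraph V} {s b : V} (h : G.Adj s b) (t : V) :
    dist G s t ≤ G.w s b + dist G b t :=
  (dist_triangle G s b t).trans (add_le_add_left (dist_le_of_adj h) _)

lemma dist_le_dist_induce (G : WGraph V) (S : Set V) (s t : V) :
    dist G s t ≤ dist (induce G S) s t :=
  le_dist_of_forall_isWalk fun _ hl =>
    dist_le_wlen ⟨hl.1.imp fun _ _ h => h.1, hl.2⟩

lemma bdryIn_subset_bdry (G : WGraph V) (P : V → ι) (i : ι) : bdryIn G P i ⊆ bdry G P :=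
  fun _ ⟨hv, u, hvu, hu⟩ => ⟨u, hvu, hv ▸ hu⟩

section Partition

variable {G : WGraph V} {P : V → ι} {s t : V} {l : List V}

lemma IsWalk.exists_bdryIn_exit {i : ι} (hl : IsWalk G s t l) (hs : P s = i) (ht : P t ≠ i) :
    ∃ b ∈ bdryIn G P i, dist (partGraph G P i) s b + dist G b t ≤ wlen G l := by
  induction hl using IsWalk.induction with
  | singleton => exact absurd hs ht
  | cons s c l hsc h ih =>
    by_cases hc : P c = i
    · obtain ⟨b, hb, hle⟩ := ih hc
      refine ⟨b, hb, ?_⟩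
      calc dist (partGraph G P i) s b + dist G b t
          ≤ G.w s c + dist (partGraph G P i) c b + dist G b t := by
            gcongr
            exact dist_le_add_of_adj (G := partGraph G P i) ⟨hsc, hs, hc⟩ b
        _ ≤ G.w s c + wlen G (c :: l) := by rw [add_assoc]; gcongr
    · refine ⟨s, ⟨hs, c, hsc, hc⟩, ?_⟩
      rw [dist_self, zero_add]
      exact dist_le_wlen (h.cons hsc)

/-- The first alternative, a walk that may have stayed inside `G_j` so far, is the induction
invariant that lets the last entry into partition `j` be found walking forward. -/
lemma IsWalk.exists_bdryIn_entry {j : ι} (hl : IsWalk G s t l) (ht : P t = j) :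
    (P s = j ∧ dist (partGraph G P j) s t ≤ wlen G l) ∨
      ∃ b ∈ bdryIn G P j, dist G s b + dist (partGraph G P j) b t ≤ wlen G l := by
  induction hl using IsWalk.induction with
  | singleton => exact Or.inl ⟨ht, (dist_self _ _).trans_le zero_le⟩
  | cons s c l hsc _ ih =>
    rcases ih with ⟨hc, hle⟩ | ⟨b, hb, hle⟩
    · by_cases hs : P s = j
      · refine Or.inl ⟨hs, ?_⟩
        calc dist (partGraph G P j) s t ≤ G.w s c + dist (partGraph G P j) c t :=
              dist_le_add_of_adj (G := partGraph G P j) ⟨hsc, hs, hc⟩ t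
          _ ≤ G.w s c + wlen G (c :: l) := by gcongr
      · exact Or.inr ⟨c, ⟨hc, s, G.symm hsc, hs⟩, add_le_add (dist_le_of_adj hsc) hle⟩
    · refine Or.inr ⟨b, hb, ?_⟩
      calc dist G s b + dist (partGraph G P j) b t
          ≤ G.w s c + dist G c b + dist (partGraph G P j) b t := by
            gcongr
            exact dist_le_add_of_adj hsc b
        _ ≤ G.w s c + wlen G (c :: l) := by rw [add_assoc]; gcongr

lemma iInf_bdryIn_exit_le_dist {i : ι} (hs : P s = i) (ht : P t ≠ i) :
    ⨅ b ∈ bdryIn G P i, dist (partGraph G P i) s b + dist G b t ≤ dist G s t :=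
  le_dist_of_forall_isWalk fun _ hl =>
    let ⟨b, hb, hle⟩ := hl.exists_bdryIn_exit hs ht
    iInf₂_le_of_le b hb hle

lemma iInf_bdryIn_entry_le_dist {j : ι} (hs : P s ≠ j) (ht : P t = j) :
    ⨅ b ∈ bdryIn G P j, dist G s b + dist (partGraph G P j) b t ≤ dist G s t :=
  le_dist_of_forall_isWalk fun _ hl => by
    rcases hl.exists_bdryIn_entry ht with ⟨hs', -⟩ | ⟨b, hb, hle⟩
    · exact absurd hs' hs
    · exact iInf₂_le_of_le b hb hle

end Partition

theorem stmt3_general {V ι : Type*} (G : WGraph V) (P : V → ι) (i j : ι) (hij : i ≠ j)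
    (s t : V) (hs : P s = i) (ht : P t = j)
    (hov : ∀ b1 ∈ bdry G P, ∀ b2 ∈ bdry G P,
      dist (overlay G P) b1 b2 = dist G b1 b2) :
    dist G s t =
      ⨅ bp ∈ bdryIn G P i, ⨅ bq ∈ bdryIn G P j,
        dist (partGraph G P i) s bp + dist (overlay G P) bp bq +
          dist (partGraph G P j) bq t := by
  have hov' : ∀ bp ∈ bdryIn G P i, ∀ bq ∈ bdryIn G P j,
      dist (overlay G P) bp bq = dist G bp bq := fun bp hbp bq hbq =>
    hov bp (bdryIn_subset_bdry G P i hbp) bq (bdryIn_subset_bdry G P j hbq)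
  refine le_antisymm (le_iInf₂ fun bp hbp => le_iInf₂ fun bq hbq => ?_) ?_
  · rw [hov' bp hbp bq hbq]
    calc dist G s t ≤ dist G s bp + dist G bp bq + dist G bq t :=
          (dist_triangle G s bq t).trans (by gcongr; exact dist_triangle G s bp bq)
      _ ≤ _ := by gcongr <;> exact dist_le_dist_induce G _ _ _
  · calc _ ≤ ⨅ bp ∈ bdryIn G P i, dist (partGraph G P i) s bp + dist G bp t := by
          refine iInf₂_mono fun bp hbp => ?_
          calc _ = dist (partGraph G P i) s bp +
                ⨅ bq ∈ bdryIn G P j, dist G bp bq + dist (partGraph G P j) bq t := by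
                rw [ENNReal.add_iInf₂]
                refine iInf_congr fun bq => iInf_congr fun hbq => ?_
                rw [hov' bp hbp bq hbq, add_assoc]
            _ ≤ _ := by gcongr; exact iInf_bdryIn_entry_le_dist (hbp.1.trans_ne hij) ht
      _ ≤ dist G s t := iInf_bdryIn_exit_le_dist hs (ht ▸ hij.symm)

/-- cross-partition query, both endpoints non-boundary. -/
theorem stmt3 {V ι : Type*} (G : WGraph V) (P : V → ι) (i j : ι) (hij : i ≠ j)
    (hconn : ∀ u v : V, dist G u v ≠ ⊤)
    (s t : V) (hs : P s = i) (ht : P t = j)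
    (hsb : s ∉ bdry G P) (htb : t ∉ bdry G P)
    (hov : ∀ b1 ∈ bdry G P, ∀ b2 ∈ bdry G P,
      dist (overlay G P) b1 b2 = dist G b1 b2) :
    dist G s t =
      ⨅ bp ∈ bdryIn G P i, ⨅ bq ∈ bdryIn G P j,
        dist (partGraph G P i) s bp + dist (overlay G P) bp bq +
          dist (partGraph G P j) bq t :=
  stmt3_general G P i j hij s t hs ht hov

end PSP
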